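/- Let G be a 3-connected graph in 𝒢₂ such that every 3-cutset of G is stable, and suppose G is not isomorphic to the Petersen graph. Then G has no induced subgraph isomorphic to the graph obtained from the Petersen graph by deleting exactly one edge (keeping all ten vertices). -/

import Mathlib

/-!
Up to a permutation of `Fin 5` the deleted edge is `{01, 23}`; let `f` be an induced copy of
`P - e` (the Petersen graph minus that edge) in `G`. Call a *connection* a walk of `G` joining
two distinct nonadjacent vertices of the copy through vertices outside it. A shortest connection
is an induced path whose inner vertices see in the copy only its ends or common neighbours of
its ends: cutting it at any other vertex would shorten it, except at a vertex with two
neighbours in the copy, which girth five and the shape of `P - e` rule out. Between any two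
nonadjacent vertices, `P - e` has induced paths avoiding their common neighbours of length 4
and of length 3 (if they have a common neighbour) or 5 (if not); closing a shortest connection
by one of the other parity gives an odd hole of length at least 7, or else a 4-cycle. So there
is no connection. But by 3-connectivity the vertex `01`, of degree two in `P - e`, has a
neighbour outside the copy, and since `{01, 24, 34}` is not a stable cutset, that neighbour
reaches the rest of the copy avoiding `01, 24, 34`: a connection.
-/

open SimpleGraph

/-- A *hole* of length `n` in `G`: an induced cycle of length `n ≥ 4`. -/
def SimpleGraph.HasHole {V : Type*} (G : SimpleGraph V) (n : ℕ) : Prop :=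
  4 ≤ n ∧ ∃ (v : V) (w : G.Walk v v), w.IsCycle ∧ w.toSubgraph.IsInduced ∧ w.length = n

/-- `G ∈ 𝒢_ℓ`: `G` has girth `2ℓ+1` and no odd hole of length at least `2ℓ+3`. -/
def SimpleGraph.MemGFamily {V : Type*} (G : SimpleGraph V) (l : ℕ) : Prop :=
  G.egirth = (2 * l + 1 : ℕ) ∧ ∀ n : ℕ, Odd n → 2 * l + 3 ≤ n → ¬ G.HasHole n

/-- `X` is a cutset of `G`: deleting the vertices of `X` disconnects `G`. -/
def SimpleGraph.IsCutset {V : Type*} (G : SimpleGraph V) (X : Set V) : Prop :=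
  ¬ (G.induce (Xᶜ : Set V)).Connected

/-- `G` is 3-connected: more than 3 vertices, and deleting any at most 2 vertices
leaves a connected graph. -/
def SimpleGraph.ThreeConnected {V : Type*} [Fintype V] (G : SimpleGraph V) : Prop :=
  3 < Fintype.card V ∧ ∀ X : Set V, X.ncard ≤ 2 → (G.induce (Xᶜ : Set V)).Connected

/-- The Petersen graph, realized as the Kneser graph of 2-element subsets of a 5-set:
two 2-subsets are adjacent iff they are disjoint. -/
def petersen : SimpleGraph {s : Finset (Fin 5) // s.card = 2} where
  Adj a b := Disjoint (a : Finset (Fin 5)) (b : Finset (Fin 5))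
  symm := ⟨fun a b h => h.symm⟩
  loopless := ⟨fun a h => by
    have h' : (a : Finset (Fin 5)) = ∅ := by simpa using disjoint_self.mp h
    have := a.property
    rw [h'] at this
    simp at this⟩


namespace SimpleGraph

variable {V W : Type*} {G : SimpleGraph V} {H : SimpleGraph W}

def walkOfSeq (c : ℕ → V) : (n : ℕ) → (∀ i < n, G.Adj (c i) (c (i + 1))) → G.Walk (c 0) (c n)
  | 0, _ => .nil
  | n + 1, h => .cons (h 0 n.succ_pos)
      (walkOfSeq (fun i => c (i + 1)) n fun i hi => h (i + 1) (by omega))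

theorem length_walkOfSeq (c : ℕ → V) (n : ℕ) (h : ∀ i < n, G.Adj (c i) (c (i + 1))) :
    (walkOfSeq c n h).length = n := by
  induction n generalizing c with
  | zero => rfl
  | succ n ih => simp [walkOfSeq, ih]

theorem getVert_walkOfSeq (c : ℕ → V) (n : ℕ) (h : ∀ i < n, G.Adj (c i) (c (i + 1)))
    {i : ℕ} (hi : i ≤ n) : (walkOfSeq c n h).getVert i = c i := by
  induction n generalizing c i with
  | zero =>
    obtain rfl : i = 0 := by omega
    rfl
  | succ n ih =>
    cases i with
    | zero => rfl
    | succ i => simp [walkOfSeq, ih _ _ (by omega : i ≤ n)]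

theorem isCycle_walkOfSeq_copy {n : ℕ} (hn : 3 ≤ n) {c : ℕ → V} (hper : c n = c 0)
    (hadj : ∀ i < n, G.Adj (c i) (c (i + 1))) (hne : ∀ j < n, ∀ i < j, c i ≠ c j) :
    ((walkOfSeq c n hadj).copy rfl hper).IsCycle := by
  rw [Walk.isCycle_iff_isPath_tail_and_le_length, ← Walk.IsPath.getVert_injOn_iff]
  refine ⟨fun i hi j hj hij => ?_, by simp [length_walkOfSeq, hn]⟩
  simp only [Set.mem_ofPred_eq, Walk.length_tail, Walk.length_copy, length_walkOfSeq,
    Walk.getVert_tail, Walk.getVert_copy] at hi hj hij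
  rw [getVert_walkOfSeq _ _ _ (by omega), getVert_walkOfSeq _ _ _ (by omega)] at hij
  -- indices `1, …, n` are pairwise distinct once `c n` is read as `c 0`
  have key : ∀ a b, a < b → b ≤ n - 1 → c (a + 1) ≠ c (b + 1) := by
    intro a b hab hb
    rcases (show b + 1 < n ∨ b + 1 = n by omega) with hb' | hb'
    · exact hne _ hb' _ (by omega)
    · rw [hb', hper]
      exact (hne _ (by omega) 0 (by omega)).symm
  rcases lt_trichotomy i j with h | h | h
  · exact absurd hij (key i j h hj)
  · exact h
  · exact absurd hij.symm (key j i h hi)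

theorem hasHole_of_seq {n : ℕ} (hn : 4 ≤ n) (c : ℕ → V) (hper : c n = c 0)
    (hadj : ∀ i < n, G.Adj (c i) (c (i + 1)))
    (hchord : ∀ j < n, ∀ i < j,
      c i ≠ c j ∧ (G.Adj (c i) (c j) → j = i + 1 ∨ (i = 0 ∧ j = n - 1))) :
    G.HasHole n := by
  let w := (walkOfSeq c n hadj).copy rfl hper
  have hget : ∀ i ≤ n, w.getVert i = c i := fun i hi => by
    simp [w, getVert_walkOfSeq _ _ _ hi]
  have hmem : ∀ v ∈ w.support, ∃ i < n, c i = v := by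
    intro v hv
    obtain ⟨i, rfl, hi⟩ := Walk.mem_support_iff_exists_getVert.mp hv
    rcases (show i < n ∨ i = n by simpa [w, length_walkOfSeq] using hi.lt_or_eq) with hi | rfl
    · exact ⟨i, hi, (hget i hi.le).symm⟩
    · exact ⟨0, by omega, by rw [hget i le_rfl, hper]⟩
  have hedge : ∀ i < n, w.toSubgraph.Adj (c i) (c (i + 1)) := fun i hi => by
    simpa [hget i (by omega), hget (i + 1) (by omega)] using
      w.toSubgraph_adj_getVert (i := i) (by simpa [w, length_walkOfSeq] using hi)
  have hlast : w.toSubgraph.Adj (c (n - 1)) (c 0) := by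
    simpa [Nat.sub_add_cancel (by omega : 1 ≤ n), hper] using hedge (n - 1) (by omega)
  refine ⟨hn, c 0, w, isCycle_walkOfSeq_copy (by omega) hper hadj
    (fun j hj i hij => (hchord j hj i hij).1), ?_, by simp [w, length_walkOfSeq]⟩
  rintro _ hv _ hv' hadj'
  obtain ⟨i, hi, rfl⟩ := hmem _ ((w.mem_verts_toSubgraph).mp hv)
  obtain ⟨j, hj, rfl⟩ := hmem _ ((w.mem_verts_toSubgraph).mp hv')
  rcases lt_trichotomy i j with hij | rfl | hij
  · rcases (hchord j hj i hij).2 hadj' with rfl | ⟨rfl, rfl⟩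
    exacts [hedge i hi, hlast.symm]
  · exact (hadj'.ne rfl).elim
  · rcases (hchord i hi j hij).2 hadj'.symm with rfl | ⟨rfl, rfl⟩
    exacts [(hedge j hj).symm, hlast]

theorem not_adj_of_four_le_egirth (hg : 4 ≤ G.egirth) {a b c : V} (hab : G.Adj a b)
    (hbc : G.Adj b c) : ¬ G.Adj c a := by
  intro hca
  have hcyc : (Walk.cons hab (.cons hbc (.cons hca .nil))).IsCycle := by
    simp [Walk.cons_isCycle_iff, hab.ne, hbc.ne, hca.ne, hab.ne', hca.ne']
  have := le_egirth.mp hg _ _ hcyc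
  norm_num at this

theorem not_adj_of_five_le_egirth (hg : 5 ≤ G.egirth) {a b c d : V} (hab : G.Adj a b)
    (hbc : G.Adj b c) (hcd : G.Adj c d) (hac : a ≠ c) (hbd : b ≠ d) : ¬ G.Adj d a := by
  intro hda
  have hcyc : (Walk.cons hab (.cons hbc (.cons hcd (.cons hda .nil)))).IsCycle := by
    simp [Walk.cons_isCycle_iff, hab.ne, hbc.ne, hcd.ne, hda.ne, hab.ne', hda.ne', hac, hbd,
      hac.symm]
  have := le_egirth.mp hg _ _ hcyc
  norm_num at this

variable (G) in
structure IsInducedPathSeq (p : ℕ → V) (k : ℕ) : Prop where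
  adj : ∀ i < k, G.Adj (p i) (p (i + 1))
  ne : ∀ j ≤ k, ∀ i < j, p i ≠ p j
  eq_succ_of_adj : ∀ j ≤ k, ∀ i < j, G.Adj (p i) (p j) → j = i + 1

instance [DecidableEq V] [DecidableRel G.Adj] (p : ℕ → V) (k : ℕ) :
    Decidable (G.IsInducedPathSeq p k) :=
  decidable_of_iff (_ ∧ _ ∧ _)
    ⟨fun ⟨h₁, h₂, h₃⟩ => ⟨h₁, h₂, h₃⟩, fun ⟨h₁, h₂, h₃⟩ => ⟨h₁, h₂, h₃⟩⟩

theorem IsInducedPathSeq.map (f : H ↪g G) {q : ℕ → W} {r : ℕ} (hq : H.IsInducedPathSeq q r) :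
    G.IsInducedPathSeq (f ∘ q) r where
  adj i hi := f.map_rel_iff.mpr (hq.adj i hi)
  ne j hj i hi h := hq.ne j hj i hi (f.injective h)
  eq_succ_of_adj j hj i hi h := hq.eq_succ_of_adj j hj i hi (f.map_rel_iff.mp h)

theorem IsInducedPathSeq.hasHole_append {p q : ℕ → V} {k r : ℕ} (hp : G.IsInducedPathSeq p k)
    (hq : G.IsInducedPathSeq q r) (hk : 2 ≤ k) (hr : 2 ≤ r) (hpq : p k = q 0) (hqp : q r = p 0)
    (hne : ∀ i < k, 0 < i → ∀ j < r, 0 < j → p i ≠ q j)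
    (hnadj : ∀ i < k, 0 < i → ∀ j < r, 0 < j → ¬ G.Adj (p i) (q j)) :
    G.HasHole (k + r) := by
  let c : ℕ → V := fun i => if i ≤ k then p i else q (i - k)
  have hcp : ∀ i ≤ k, c i = p i := fun i hi => if_pos hi
  have hcq : ∀ j ≤ r, c (k + j) = q j := fun j hj => by
    rcases j.eq_zero_or_pos with rfl | hj0
    · exact (hcp k le_rfl).trans hpq
    · simp [c, show ¬ k + j ≤ k by omega]
  have hside : ∀ m < k + r, m ≤ k ∨ ∃ j < r, 0 < j ∧ m = k + j := fun m hm =>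
    if hm' : m ≤ k then .inl hm' else .inr ⟨m - k, by omega, by omega, by omega⟩
  refine hasHole_of_seq (by omega) c (by rw [hcq r le_rfl, hcp 0 (by omega), hqp]) ?_ ?_
  · intro m hm
    rcases Nat.lt_or_ge m k with h | h
    · rw [hcp m h.le, hcp (m + 1) h]
      exact hp.adj m h
    · obtain ⟨j, rfl⟩ := Nat.exists_eq_add_of_le h
      rw [hcq j (by omega), add_assoc, hcq (j + 1) (by omega)]
      exact hq.adj j (by omega)
  intro m' hm' m hm
  rcases hside m' hm' with h' | ⟨j', hj', hj'0, rfl⟩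
  · rw [hcp m (by omega), hcp m' h']
    exact ⟨hp.ne m' h' m hm, fun h => .inl (hp.eq_succ_of_adj m' h' m hm h)⟩
  rw [hcq j' hj'.le]
  rcases hside m (by omega) with h | ⟨j, hj, hj0, rfl⟩
  · rw [hcp m h]
    rcases (show m = 0 ∨ m = k ∨ (0 < m ∧ m < k) by omega) with rfl | rfl | ⟨h0, hmk⟩
    · rw [← hqp]
      exact ⟨(hq.ne r le_rfl j' hj').symm,
        fun h => .inr ⟨rfl, by have := hq.eq_succ_of_adj r le_rfl j' hj' h.symm; omega⟩⟩
    · rw [hpq]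
      exact ⟨hq.ne j' hj'.le 0 hj'0,
        fun h => .inl (by have := hq.eq_succ_of_adj j' hj'.le 0 hj'0 h; omega)⟩
    · exact ⟨hne m hmk h0 j' hj' hj'0, fun h => absurd h (hnadj m hmk h0 j' hj' hj'0)⟩
  · rw [hcq j hj.le]
    exact ⟨hq.ne j' hj'.le j (by omega),
      fun h => .inl (by have := hq.eq_succ_of_adj j' hj'.le j (by omega) h; omega)⟩

section Connection

variable (f : H ↪g G)

structure IsConnection (α β : W) (p : ℕ → V) (k : ℕ) : Prop where
  ne : α ≠ β
  not_adj : ¬ H.Adj α β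
  start : p 0 = f α
  finish : p k = f β
  adj : ∀ i < k, G.Adj (p i) (p (i + 1))
  notMem_range : ∀ i < k, 0 < i → p i ∉ Set.range f

def HasConnection (k : ℕ) : Prop := ∃ α β p, IsConnection f α β p k

structure IsCleanConnection (α β : W) (p : ℕ → V) (k : ℕ) : Prop
    extends IsConnection f α β p k where
  isInducedPathSeq : G.IsInducedPathSeq p k
  adj_image : ∀ i < k, 0 < i → ∀ s, G.Adj (p i) (f s) → s = α ∨ s = β ∨ (H.Adj s α ∧ H.Adj s β)

variable (H) in
def IsAvoidingPath (α β : W) (q : ℕ → W) (r : ℕ) : Prop :=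
  q 0 = β ∧ q r = α ∧ H.IsInducedPathSeq q r ∧ ∀ j < r, 0 < j → ¬ (H.Adj (q j) α ∧ H.Adj (q j) β)

instance [DecidableEq W] [DecidableRel H.Adj] (α β : W) (q : ℕ → W) (r : ℕ) :
    Decidable (H.IsAvoidingPath α β q r) := by
  unfold IsAvoidingPath; infer_instance

variable {f} {α β : W} {p : ℕ → V} {k : ℕ}

theorem IsConnection.two_le (hp : IsConnection f α β p k) : 2 ≤ k := by
  rcases (show k = 0 ∨ k = 1 ∨ 2 ≤ k by omega) with rfl | rfl | h
  · exact absurd (f.injective (hp.start.symm.trans hp.finish)) hp.ne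
  · have := hp.adj 0 one_pos
    rw [hp.start, zero_add, hp.finish] at this
    exact absurd (f.map_rel_iff.mp this) hp.not_adj
  · exact h

theorem IsConnection.reverse (hp : IsConnection f α β p k) :
    IsConnection f β α (fun i => p (k - i)) k where
  ne := hp.ne.symm
  not_adj h := hp.not_adj h.symm
  start := by simpa using hp.finish
  finish := by simpa using hp.start
  adj i hi := by
    simpa [show k - i = k - (i + 1) + 1 by omega] using (hp.adj (k - (i + 1)) (by omega)).symm
  notMem_range i hi hi0 := hp.notMem_range (k - i) (by omega) (by omega)

theorem IsConnection.shortcut (hp : IsConnection f α β p k) {i j : ℕ} (hij : i + 1 < j)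
    (hj : j ≤ k) (hadj : G.Adj (p i) (p j)) :
    IsConnection f α β (fun m => if m ≤ i then p m else p (m + (j - i - 1))) (k - (j - i - 1))
    where
  ne := hp.ne
  not_adj := hp.not_adj
  start := by simpa using hp.start
  finish := by
    simpa [show ¬ k - (j - i - 1) ≤ i by omega, show k - (j - i - 1) + (j - i - 1) = k by omega]
      using hp.finish
  adj m hm := by
    rcases lt_trichotomy m i with h | rfl | h
    · simpa [h.le, show m + 1 ≤ i by omega] using hp.adj m (by omega)
    · simpa [show m + 1 + (j - m - 1) = j by omega] using hadj
    · simpa [show ¬ m ≤ i by omega, show ¬ m + 1 ≤ i by omega,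
        show m + 1 + (j - i - 1) = m + (j - i - 1) + 1 by omega]
        using hp.adj (m + (j - i - 1)) (by omega)
  notMem_range m hm hm0 := by
    by_cases h : m ≤ i
    · simpa [h] using hp.notMem_range m (by omega) hm0
    · simpa [h] using hp.notMem_range (m + (j - i - 1)) (by omega) (by omega)

theorem IsConnection.truncate (hp : IsConnection f α β p k) {i : ℕ} (hi : i < k) (hi0 : 0 < i)
    {s : W} (hs : G.Adj (p i) (f s)) (hsα : α ≠ s) (hnadj : ¬ H.Adj α s) :
    IsConnection f α s (fun m => if m ≤ i then p m else f s) (i + 1) where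
  ne := hsα
  not_adj := hnadj
  start := by simpa using hp.start
  finish := by simp
  adj m hm := by
    rcases (show m < i ∨ m = i by omega) with h | rfl
    · simpa [h.le, show m + 1 ≤ i by omega] using hp.adj m (by omega)
    · simpa using hs
  notMem_range m hm hm0 := by
    simpa [show m ≤ i by omega] using hp.notMem_range m (by omega) hm0

theorem IsConnection.eq_succ_of_adj_of_minimal (hmin : ∀ m < k, ¬ HasConnection f m)
    (hp : IsConnection f α β p k) {i j : ℕ} (hj : j ≤ k) (hij : i < j)
    (hadj : G.Adj (p i) (p j)) : j = i + 1 := by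
  by_contra h
  exact hmin _ (by omega) ⟨α, β, _, hp.shortcut (by omega) hj hadj⟩

theorem IsConnection.isInducedPathSeq_of_minimal (hmin : ∀ m < k, ¬ HasConnection f m)
    (hp : IsConnection f α β p k) : G.IsInducedPathSeq p k where
  adj := hp.adj
  eq_succ_of_adj j hj i hij := hp.eq_succ_of_adj_of_minimal hmin hj hij
  ne j hj i hij heq := by
    rcases hj.lt_or_eq with hj | rfl
    · have := hp.eq_succ_of_adj_of_minimal hmin hj (by omega) (heq ▸ hp.adj j hj)
      omega
    · rcases i.eq_zero_or_pos with rfl | hi0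
      · exact hp.ne (f.injective (hp.start.symm.trans (heq.trans hp.finish)))
      · exact hp.notMem_range i hij hi0 ⟨β, (heq.trans hp.finish).symm⟩

/-- Otherwise cutting the connection at `s` would shorten it, unless `p i` is the last inner
vertex; but then `p i` would see both `s` and the end. -/
theorem IsConnection.adj_start_of_minimal
    (hone : ∀ x ∉ Set.range f, ∀ σ τ, G.Adj x (f σ) → G.Adj x (f τ) → σ = τ)
    (hmin : ∀ m < k, ¬ HasConnection f m) (hp : IsConnection f α β p k) {i : ℕ} (hi : i < k)
    (hi0 : 0 < i) {s : W} (hs : G.Adj (p i) (f s)) (hsα : s ≠ α) (hsβ : s ≠ β) :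
    H.Adj s α := by
  by_contra h
  rcases (show i + 1 < k ∨ i + 1 = k by omega) with hlt | heq
  · exact hmin _ hlt ⟨α, s, _, hp.truncate hi hi0 hs hsα.symm fun h' => h h'.symm⟩
  · have hβ : G.Adj (p i) (f β) := by simpa [heq, hp.finish] using hp.adj i hi
    exact hsβ (hone _ (hp.notMem_range i hi hi0) s β hs hβ)

theorem IsConnection.isCleanConnection_of_minimal
    (hone : ∀ x ∉ Set.range f, ∀ σ τ, G.Adj x (f σ) → G.Adj x (f τ) → σ = τ)
    (hmin : ∀ m < k, ¬ HasConnection f m) (hp : IsConnection f α β p k) :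
    IsCleanConnection f α β p k where
  toIsConnection := hp
  isInducedPathSeq := hp.isInducedPathSeq_of_minimal hmin
  adj_image i hi hi0 s hs := by
    by_cases hsα : s = α
    · exact .inl hsα
    by_cases hsβ : s = β
    · exact .inr (.inl hsβ)
    refine .inr (.inr ⟨hp.adj_start_of_minimal hone hmin hi hi0 hs hsα hsβ, ?_⟩)
    exact hp.reverse.adj_start_of_minimal hone hmin (i := k - i) (by omega) (by omega)
      (by simpa [show k - (k - i) = i by omega] using hs) hsβ hsα

theorem IsCleanConnection.hasHole (hc : IsCleanConnection f α β p k) {q : ℕ → W} {r : ℕ}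
    (hq : H.IsAvoidingPath α β q r) (hr : 2 ≤ r) : G.HasHole (k + r) := by
  obtain ⟨hq0, hqr, hq, havoid⟩ := hq
  refine hc.isInducedPathSeq.hasHole_append (hq.map f) hc.two_le hr
    (by simp [hc.finish, hq0]) (by simp [hc.start, hqr]) ?_ ?_
  · intro i hi hi0 j _ _ h
    exact hc.notMem_range i hi hi0 ⟨q j, h.symm⟩
  · intro i hi hi0 j hj hj0 hadj
    rcases hc.adj_image i hi hi0 (q j) hadj with h | h | h
    · exact hq.ne r le_rfl j hj (h.trans hqr.symm)
    · exact hq.ne j hj.le 0 hj0 (hq0.trans h.symm)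
    · exact havoid j hj hj0 h

theorem isCleanConnection_of_adj_of_adj {x : V} (hx : x ∉ Set.range f) {σ τ : W} (hne : σ ≠ τ)
    (hnadj : ¬ H.Adj σ τ) (hσ : G.Adj x (f σ)) (hτ : G.Adj x (f τ))
    (honly : ∀ s, G.Adj x (f s) → s = σ ∨ s = τ) :
    IsCleanConnection f σ τ (fun i => if i = 0 then f σ else if i = 1 then x else f τ) 2 where
  ne := hne
  not_adj := hnadj
  start := rfl
  finish := rfl
  adj i hi := by
    interval_cases i
    exacts [hσ.symm, hτ]
  notMem_range i hi hi0 := by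
    obtain rfl : i = 1 := by omega
    exact hx
  isInducedPathSeq := {
    adj i hi := by
      interval_cases i
      exacts [hσ.symm, hτ]
    ne j hj i hij := by
      interval_cases j <;> interval_cases i <;> simp [hσ.ne', hτ.ne, f.injective.ne hne]
    eq_succ_of_adj j hj i hij hadj := by
      interval_cases j <;> interval_cases i
      all_goals first | rfl | exact absurd (f.map_rel_iff.mp hadj) hnadj }
  adj_image i hi hi0 s hs := by
    obtain rfl : i = 1 := by omega
    exact (honly s hs).elim .inl (.inr ∘ .inl)

end Connection

-- `3 ≤ G.edist a b`, in a form that `decide` can evaluate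
variable (G) in
def FarApart (a b : V) : Prop := a ≠ b ∧ ¬ G.Adj a b ∧ ∀ c, ¬ (G.Adj a c ∧ G.Adj b c)

instance [Fintype V] [DecidableEq V] [DecidableRel G.Adj] (a b : V) :
    Decidable (G.FarApart a b) := by
  unfold FarApart; infer_instance

theorem not_connected_induce_compl_of_neighborSet_subset {X : Set V} {u v : V}
    (hN : G.neighborSet u ⊆ X) (hu : u ∉ X) (hv : v ∉ X) (huv : u ≠ v) :
    ¬ (G.induce Xᶜ).Connected := by
  intro hconn
  obtain ⟨w⟩ := hconn.preconnected ⟨u, hu⟩ ⟨v, hv⟩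
  cases w with
  | nil => exact huv rfl
  | cons h _ => exact (Set.mem_compl_iff _ _).mp (Subtype.prop _) (hN h)

theorem Walk.exists_getVert_first_mem {u v : V} (w : G.Walk u v) (hw : 0 < w.length)
    {R : Set V} (hv : v ∈ R) : ∃ k, 0 < k ∧ k ≤ w.length ∧ w.getVert k ∈ R ∧
      ∀ i < k, 0 < i → w.getVert i ∉ R := by
  classical
  have hex : ∃ k, 0 < k ∧ k ≤ w.length ∧ w.getVert k ∈ R := ⟨w.length, hw, le_rfl, by simpa⟩
  obtain ⟨hk0, hkl, hkR⟩ := Nat.find_spec hex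
  exact ⟨Nat.find hex, hk0, hkl, hkR, fun i hi hi0 hiR =>
    Nat.find_min hex hi ⟨hi0, by omega, hiR⟩⟩

def Iso.deleteEdges {G' : SimpleGraph W} (φ : G ≃g G') (s : Set (Sym2 V)) :
    G.deleteEdges s ≃g G'.deleteEdges (Sym2.map φ '' s) where
  toEquiv := φ.toEquiv
  map_rel_iff' {a b} := by
    change (G'.deleteEdges _).Adj (φ a) (φ b) ↔ _
    rw [deleteEdges_adj, deleteEdges_adj, φ.map_adj_iff, ← Sym2.map_mk,
      (Sym2.map.injective φ.injective).mem_set_image]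

end SimpleGraph

abbrev PetersenVertex := {s : Finset (Fin 5) // s.card = 2}

instance : DecidableRel petersen.Adj := fun a b =>
  inferInstanceAs (Decidable (Disjoint (a : Finset (Fin 5)) (b : Finset (Fin 5))))

def petersenIsoOfPerm (π : Equiv.Perm (Fin 5)) : petersen ≃g petersen where
  toEquiv := π.finsetCongr.subtypeEquiv fun s => by simp
  map_rel_iff' {s t} := by
    change Disjoint (s.1.map π.toEmbedding) (t.1.map π.toEmbedding) ↔ Disjoint s.1 t.1
    exact Finset.disjoint_map _

def v01 : PetersenVertex := ⟨{0, 1}, rfl⟩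
def v23 : PetersenVertex := ⟨{2, 3}, rfl⟩
def v24 : PetersenVertex := ⟨{2, 4}, rfl⟩
def v34 : PetersenVertex := ⟨{3, 4}, rfl⟩

theorem petersen_exists_perm_map_edge : ∀ a b : PetersenVertex, petersen.Adj a b →
    ∃ π : Equiv.Perm (Fin 5), Sym2.map (petersenIsoOfPerm π) s(v01, v23) = s(a, b) := by
  decide +kernel

def petersenMinusEdge : SimpleGraph PetersenVertex := petersen.deleteEdges {s(v01, v23)}

instance : DecidableRel petersenMinusEdge.Adj := fun a b =>
  inferInstanceAs (Decidable ((petersen \ fromEdgeSet {s(v01, v23)}).Adj a b))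

theorem petersenMinusEdge_adj_v01 : ∀ γ, petersenMinusEdge.Adj v01 γ ↔ γ = v24 ∨ γ = v34 := by
  decide

theorem petersenMinusEdge_no_farApart_triple : ∀ a b c : PetersenVertex,
    petersenMinusEdge.FarApart a b → petersenMinusEdge.FarApart a c →
      ¬ petersenMinusEdge.FarApart b c := by
  decide

-- The bounds `qᵢ₊₁ ∈ neighborFinset qᵢ` only keep the search of `decide` small.
theorem petersenMinusEdge_exists_avoidingPath_three : ∀ α β : PetersenVertex, α ≠ β →
    ¬ petersenMinusEdge.Adj α β → ¬ petersenMinusEdge.FarApart α β →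
    ∃ q₁ ∈ petersenMinusEdge.neighborFinset β, ∃ q₂ ∈ petersenMinusEdge.neighborFinset q₁,
      petersenMinusEdge.IsAvoidingPath α β (fun i => [β, q₁, q₂, α].getD i α) 3 := by
  decide +kernel

theorem petersenMinusEdge_exists_avoidingPath_four : ∀ α β : PetersenVertex, α ≠ β →
    ¬ petersenMinusEdge.Adj α β →
    ∃ q₁ ∈ petersenMinusEdge.neighborFinset β, ∃ q₂ ∈ petersenMinusEdge.neighborFinset q₁,
    ∃ q₃ ∈ petersenMinusEdge.neighborFinset q₂,
      petersenMinusEdge.IsAvoidingPath α β (fun i => [β, q₁, q₂, q₃, α].getD i α) 4 := by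
  decide +kernel

theorem petersenMinusEdge_exists_avoidingPath_five : ∀ α β : PetersenVertex,
    petersenMinusEdge.FarApart α β →
    ∃ q₁ ∈ petersenMinusEdge.neighborFinset β, ∃ q₂ ∈ petersenMinusEdge.neighborFinset q₁,
    ∃ q₃ ∈ petersenMinusEdge.neighborFinset q₂, ∃ q₄ ∈ petersenMinusEdge.neighborFinset q₃,
      petersenMinusEdge.IsAvoidingPath α β (fun i => [β, q₁, q₂, q₃, q₄, α].getD i α) 5 := by
  decide +kernel

section InducedPetersenMinusEdge

variable {V : Type*} {G : SimpleGraph V}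

theorem not_isCleanConnection_petersenMinusEdge (hG : G.MemGFamily 2)
    (f : petersenMinusEdge ↪g G) {α β : PetersenVertex} {p : ℕ → V} {k : ℕ} :
    ¬ IsCleanConnection f α β p k := by
  intro hc
  have hk := hc.two_le
  have hole : ∀ {q r}, petersenMinusEdge.IsAvoidingPath α β q r → 2 ≤ r → Odd (k + r) →
      7 ≤ k + r → False := fun hq hr hodd h7 => hG.2 _ hodd h7 (hc.hasHole hq hr)
  rcases Nat.even_or_odd k with ⟨m, rfl⟩ | ⟨m, rfl⟩
  · by_cases hfar : petersenMinusEdge.FarApart α β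
    · obtain ⟨q₁, -, q₂, -, q₃, -, q₄, -, hq⟩ :=
        petersenMinusEdge_exists_avoidingPath_five α β hfar
      exact hole hq (by norm_num) ⟨m + 2, by omega⟩ (by omega)
    rcases (show m = 1 ∨ 2 ≤ m by omega) with rfl | hm
    · -- a connection of length two closes a 4-cycle through a common neighbour of its ends
      obtain ⟨γ, hαγ, hβγ⟩ : ∃ γ, petersenMinusEdge.Adj α γ ∧ petersenMinusEdge.Adj β γ := by
        simpa [FarApart, hc.ne, hc.not_adj] using hfar
      have hβγ' : G.Adj (p 2) (f γ) := hc.finish ▸ f.map_rel_iff.mpr hβγ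
      have hγα' : G.Adj (f γ) (p 0) := hc.start ▸ f.map_rel_iff.mpr hαγ.symm
      refine not_adj_of_five_le_egirth hG.1.ge (hc.adj 0 (by norm_num))
        (hc.adj 1 (by norm_num)) hβγ' ?_ ?_ hγα'
      · rw [hc.start, hc.finish]
        exact f.injective.ne hc.ne
      · exact fun h => hc.notMem_range 1 (by norm_num) one_pos ⟨γ, h.symm⟩
    · obtain ⟨q₁, -, q₂, -, hq⟩ :=
        petersenMinusEdge_exists_avoidingPath_three α β hc.ne hc.not_adj hfar
      exact hole hq (by norm_num) ⟨m + 1, by omega⟩ (by omega)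
  · obtain ⟨q₁, -, q₂, -, q₃, -, hq⟩ :=
      petersenMinusEdge_exists_avoidingPath_four α β hc.ne hc.not_adj
    exact hole hq (by norm_num) ⟨m + 2, by omega⟩ (by omega)

theorem eq_of_adj_of_adj_petersenMinusEdge (hG : G.MemGFamily 2) (f : petersenMinusEdge ↪g G)
    {x : V} (hx : x ∉ Set.range f) {σ τ : PetersenVertex} (hσ : G.Adj x (f σ))
    (hτ : G.Adj x (f τ)) : σ = τ := by
  have h5 : 5 ≤ G.egirth := hG.1.ge
  have hfar : ∀ {σ τ}, σ ≠ τ → G.Adj x (f σ) → G.Adj x (f τ) →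
      petersenMinusEdge.FarApart σ τ := by
    intro σ τ hne hσ hτ
    refine ⟨hne, fun h => not_adj_of_four_le_egirth (le_trans (by norm_num) h5) hσ
      (f.map_rel_iff.mpr h) hτ.symm, fun γ ⟨hσγ, hτγ⟩ => ?_⟩
    exact not_adj_of_five_le_egirth h5 hσ (f.map_rel_iff.mpr hσγ) (f.map_rel_iff.mpr hτγ.symm)
      (fun h => hx ⟨γ, h.symm⟩) (f.injective.ne hne) hτ.symm
  by_contra hne
  refine not_isCleanConnection_petersenMinusEdge hG f
    (isCleanConnection_of_adj_of_adj hx hne (hfar hne hσ hτ).2.1 hσ hτ fun s hs => ?_)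
  by_contra! h
  exact petersenMinusEdge_no_farApart_triple σ τ s (hfar hne hσ hτ) (hfar h.1.symm hσ hs)
    (hfar h.2.symm hτ hs)

theorem not_hasConnection_petersenMinusEdge (hG : G.MemGFamily 2) (f : petersenMinusEdge ↪g G)
    (k : ℕ) : ¬ HasConnection f k := by
  classical
  intro hk
  have hex : ∃ k, HasConnection f k := ⟨k, hk⟩
  obtain ⟨α, β, p, hp⟩ := Nat.find_spec hex
  exact not_isCleanConnection_petersenMinusEdge hG f <| hp.isCleanConnection_of_minimal
    (fun _ hx _ _ => eq_of_adj_of_adj_petersenMinusEdge hG f hx) fun _ hm => Nat.find_min hex hm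

theorem exists_adj_notMem_range_petersenMinusEdge [Fintype V] (h3c : G.ThreeConnected)
    (f : petersenMinusEdge ↪g G) : ∃ x, G.Adj (f v01) x ∧ x ∉ Set.range f := by
  by_contra! h
  refine not_connected_induce_compl_of_neighborSet_subset (X := {f v24, f v34}) (u := f v01)
    (v := f v23) ?_ ?_ ?_ ?_ (h3c.2 _ ((Set.ncard_insert_le _ _).trans (by simp)))
  · rintro y hy
    obtain ⟨γ, rfl⟩ := h y hy
    rcases (petersenMinusEdge_adj_v01 γ).mp (f.map_rel_iff.mp hy) with rfl | rfl <;> simp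
  all_goals simp [f.injective.eq_iff]; decide

theorem hasConnection_petersenMinusEdge [Fintype V] (h3c : G.ThreeConnected)
    (hstable : ∀ X : Set V, X.ncard = 3 → G.IsCutset X → ∀ a ∈ X, ∀ b ∈ X, ¬ G.Adj a b)
    (f : petersenMinusEdge ↪g G) : ∃ k, HasConnection f k := by
  obtain ⟨x, hux, hx⟩ := exists_adj_notMem_range_petersenMinusEdge h3c f
  set X : Set V := {f v01, f v24, f v34}
  have hXconn : (G.induce Xᶜ).Connected := by
    by_contra hcut
    refine hstable X ?_ hcut _ (by simp [X]) _ (by simp [X])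
      (f.map_rel_iff.mpr ((petersenMinusEdge_adj_v01 v24).mpr (.inl rfl)))
    exact Set.ncard_eq_three.mpr ⟨_, _, _, by simp [f.injective.eq_iff]; decide,
      by simp [f.injective.eq_iff]; decide, by simp [f.injective.eq_iff]; decide, rfl⟩
  have hxX : x ∈ Xᶜ := by
    rintro (h | h | h) <;> exact hx ⟨_, h.symm⟩
  have hvX : f v23 ∈ Xᶜ := by simp [X, f.injective.eq_iff]; decide
  obtain ⟨w, hwX⟩ : ∃ w : G.Walk x (f v23), ∀ v ∈ w.support, v ∈ Xᶜ := by
    obtain ⟨w⟩ := hXconn.preconnected ⟨x, hxX⟩ ⟨f v23, hvX⟩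
    have hw : ∀ v ∈ (w.map (Embedding.induce Xᶜ).toHom).support, v ∈ Xᶜ := by
      simp only [Walk.support_map, List.mem_map]
      rintro _ ⟨y, -, rfl⟩
      exact y.2
    exact ⟨_, hw⟩
  let w' : G.Walk (f v01) (f v23) := .cons hux w
  obtain ⟨k, hk0, hkl, ⟨σ, hσ⟩, hfirst⟩ :=
    w'.exists_getVert_first_mem (Nat.succ_pos _) (R := Set.range f) ⟨v23, rfl⟩
  have hσX : f σ ∈ Xᶜ := by
    rw [hσ, Walk.getVert_cons _ _ hk0.ne']
    exact hwX _ (w.getVert_mem_support _)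
  refine ⟨k, v01, σ, w'.getVert, ?_, ?_, by simp, hσ.symm,
    fun i hi => w'.adj_getVert_succ (by omega), hfirst⟩
  · rintro rfl
    exact hσX (by simp [X])
  · intro h
    rcases (petersenMinusEdge_adj_v01 σ).mp h with rfl | rfl <;> exact hσX (by simp [X])

end InducedPetersenMinusEdge

theorem stmt_17_general {V : Type*} [Fintype V] (G : SimpleGraph V) (hG : G.MemGFamily 2)
    (h3c : G.ThreeConnected)
    (hstable : ∀ X : Set V, X.ncard = 3 → G.IsCutset X → ∀ a ∈ X, ∀ b ∈ X, ¬ G.Adj a b) :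
    ∀ e ∈ petersen.edgeSet, ¬ Nonempty ((petersen.deleteEdges {e}) ↪g G) := by
  rintro ⟨a, b⟩ he ⟨f⟩
  obtain ⟨π, hπ⟩ := petersen_exists_perm_map_edge a b he
  have φ := (petersenIsoOfPerm π).deleteEdges {s(v01, v23)}
  rw [Set.image_singleton, hπ] at φ
  let f' : petersenMinusEdge ↪g G := f.comp φ.toEmbedding
  obtain ⟨k, hk⟩ := hasConnection_petersenMinusEdge h3c hstable f'
  exact not_hasConnection_petersenMinusEdge hG f' k hk

/-- a 3-connected graph `G ∈ 𝒢₂` whose 3-cutsets are all stable and which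
is not isomorphic to the Petersen graph has no induced subgraph isomorphic to the
Petersen graph minus exactly one edge (keeping all ten vertices). -/
theorem stmt_17 {V : Type*} [Fintype V] (G : SimpleGraph V) (hG : G.MemGFamily 2)
    (h3c : G.ThreeConnected)
    (hstable : ∀ X : Set V, X.ncard = 3 → G.IsCutset X → ∀ a ∈ X, ∀ b ∈ X, ¬ G.Adj a b)
    (hnp : ¬ Nonempty (G ≃g petersen)) :
    ∀ e ∈ petersen.edgeSet, ¬ Nonempty ((petersen.deleteEdges {e}) ↪g G) :=
  stmt_17_general G hG h3c hstable
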